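/- If A is an approximant with A ⊑ M (where ⊑ is the context-closed order generated by ⊥ ⊑ V for every value V) and M v-reduces in one step to N, then A ⊑ N. -/
import Mathlib



/-- λ-terms possibly containing the constant ⊥ (Λ⊥). Pure λ-terms are those
satisfying `NoBot`. Variables are natural numbers. -/
inductive Tm : Type
  | var : ℕ → Tm
  | lam : ℕ → Tm → Tm
  | app : Tm → Tm → Tm
  | bot : Tm
deriving DecidableEq

namespace Tm

/-- Values of Λ⊥: ⊥, variables and abstractions. -/
def IsVal : Tm → Prop
  | var _ => True
  | lam _ _ => True
  | bot => True
  | app _ _ => False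

/-- A term is a pure λ-term when it contains no occurrence of ⊥. -/
def NoBot : Tm → Prop
  | var _ => True
  | lam _ M => NoBot M
  | app M N => NoBot M ∧ NoBot N
  | bot => False

/-- `FV x M` : the variable `x` occurs free in `M`. -/
inductive FV : ℕ → Tm → Prop
  | var : ∀ x, FV x (var x)
  | lam : ∀ {x y M}, x ≠ y → FV x M → FV x (lam y M)
  | appL : ∀ {x M N}, FV x M → FV x (app M N)
  | appR : ∀ {x M N}, FV x N → FV x (app M N)

/-- Capture-avoiding substitution `M[x := N]` (bound variables are assumed to
be suitably renamed, so we substitute naively under binders `≠ x`). -/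
def subst : Tm → ℕ → Tm → Tm
  | var y, x, N => if y = x then N else var y
  | lam y P, x, N => if y = x then lam y P else lam y (subst P x N)
  | app P Q, x, N => app (subst P x N) (subst Q x N)
  | bot, _, _ => bot

/-- The v-reduction: contextual closure of the rules β_v, σ₁ and σ₃. -/
inductive Step : Tm → Tm → Prop
  | beta : ∀ {x M V}, IsVal V → Step (app (lam x M) V) (subst M x V)
  | sigma1 : ∀ {x M N P}, ¬ FV x P →
      Step (app (app (lam x M) N) P) (app (lam x (app M P)) N)
  | sigma3 : ∀ {x V M N}, IsVal V → ¬ FV x V →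
      Step (app V (app (lam x M) N)) (app (lam x (app V M)) N)
  | appL : ∀ {M M' N}, Step M M' → Step (app M N) (app M' N)
  | appR : ∀ {M N N'}, Step N N' → Step (app M N) (app M N')
  | lam : ∀ {x M M'}, Step M M' → Step (lam x M) (lam x M')

/-- The σ-reduction: contextual closure of the rules σ₁ and σ₃ only. -/
inductive SStep : Tm → Tm → Prop
  | sigma1 : ∀ {x M N P}, ¬ FV x P →
      SStep (app (app (lam x M) N) P) (app (lam x (app M P)) N)
  | sigma3 : ∀ {x V M N}, IsVal V → ¬ FV x V →
      SStep (app V (app (lam x M) N)) (app (lam x (app V M)) N)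
  | appL : ∀ {M M' N}, SStep M M' → SStep (app M N) (app M' N)
  | appR : ∀ {M N N'}, SStep N N' → SStep (app M N) (app M N')
  | lam : ∀ {x M M'}, SStep M M' → SStep (lam x M) (lam x M')

/-- A term is in v-normal form when no v-reduction step applies. -/
def VNormal (M : Tm) : Prop := ∀ N, ¬ Step M N

mutual
  /-- Grammar of v-normal forms: general normal forms `G ::= H | R`. -/
  inductive IsG : Tm → Prop
    | ofH : ∀ {t}, IsH t → IsG t
    | ofR : ∀ {t}, IsR t → IsG t
  /-- head normal forms `H ::= x | λx.G | x H G₁ ⋯ G_k`. -/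
  inductive IsH : Tm → Prop
    | var : ∀ x, IsH (var x)
    | lam : ∀ {x t}, IsG t → IsH (lam x t)
    | spine : ∀ {t}, IsHSpine t → IsH t
  /-- terms of the shape `x H G₁ ⋯ G_k` (k ≥ 0). -/
  inductive IsHSpine : Tm → Prop
    | head : ∀ {x h}, IsH h → IsHSpine (app (var x) h)
    | app : ∀ {t g}, IsHSpine t → IsG g → IsHSpine (app t g)
  /-- redex-like normal forms `R ::= (λx.G)(y H G₁ ⋯ G_k)`. -/
  inductive IsR : Tm → Prop
    | mk : ∀ {x t s}, IsG t → IsHSpine s → IsR (app (lam x t) s)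
end

mutual
  /-- The set 𝒜 of approximants: `A ::= B | C`. -/
  inductive IsA : Tm → Prop
    | ofB : ∀ {t}, IsB t → IsA t
    | ofC : ∀ {t}, IsC t → IsA t
  /-- `B ::= x | λx.A | ⊥ | x B A₁ ⋯ A_k`. -/
  inductive IsB : Tm → Prop
    | var : ∀ x, IsB (var x)
    | lam : ∀ {x t}, IsA t → IsB (lam x t)
    | bot : IsB bot
    | spine : ∀ {t}, IsBSpine t → IsB t
  /-- terms of the shape `x B A₁ ⋯ A_k` (k ≥ 0). -/
  inductive IsBSpine : Tm → Prop
    | head : ∀ {x b}, IsB b → IsBSpine (app (var x) b)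
    | app : ∀ {t a}, IsBSpine t → IsA a → IsBSpine (app t a)
  /-- `C ::= (λx.A)(y B A₁ ⋯ A_k)`. -/
  inductive IsC : Tm → Prop
    | mk : ∀ {x t s}, IsA t → IsBSpine s → IsC (app (lam x t) s)
end

/-- The order ⊑ on Λ⊥: context-closed preorder generated by ⊥ ⊑ x, ⊥ ⊑ λx.M. -/
inductive LE : Tm → Tm → Prop
  | refl : ∀ t, LE t t
  | botVar : ∀ x, LE bot (var x)
  | botLam : ∀ x t, LE bot (lam x t)
  | lam : ∀ {x s t}, LE s t → LE (lam x s) (lam x t)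
  | app : ∀ {s₁ s₂ t₁ t₂}, LE s₁ t₁ → LE s₂ t₂ → LE (app s₁ s₂) (app t₁ t₂)

/-- The set of approximants of a term:
`𝒜(M) = { A ∈ 𝒜 | ∃ N, M →*_v N and A ⊑ N }`. -/
def ApproxOf (M : Tm) : Set Tm :=
  {A | IsA A ∧ ∃ N, Relation.ReflTransGen Step M N ∧ LE A N}

end Tm

/-- Single-hole (⊥-)contexts. -/
inductive Ctx : Type
  | hole : Ctx
  | appL : Ctx → Tm → Ctx
  | appR : Tm → Ctx → Ctx
  | lam : ℕ → Ctx → Ctx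

/-- Filling the hole of a context with a term (possibly capturing variables). -/
def Ctx.fill : Ctx → Tm → Tm
  | .hole, M => M
  | .appL C N, M => .app (C.fill M) N
  | .appR N C, M => .app N (C.fill M)
  | .lam x C, M => .lam x (C.fill M)

/-- Resource terms of the CbV resource calculus: resource values are
variables `var x` and abstractions `lam x t`; simple terms are applications
`app s t` and bags `bag [v₁,…,v_k]` (finite multisets of values, represented
as lists considered up to permutation by the rules below). -/
inductive RTm : Type
  | var : ℕ → RTm
  | lam : ℕ → RTm → RTm
  | app : RTm → RTm → RTm
  | bag : List RTm → RTm

namespace RTm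

/-- Resource values. -/
def IsRVal : RTm → Prop
  | var _ => True
  | lam _ _ => True
  | _ => False

/-- Simple terms (applications and bags). -/
def IsSimple : RTm → Prop
  | app _ _ => True
  | bag _ => True
  | _ => False

/-- Free-variable occurrence predicate for resource terms. -/
inductive RFV : ℕ → RTm → Prop
  | var : ∀ x, RFV x (var x)
  | lam : ∀ {x y t}, x ≠ y → RFV x t → RFV x (lam y t)
  | appL : ∀ {x s t}, RFV x s → RFV x (app s t)
  | appR : ∀ {x s t}, RFV x t → RFV x (app s t)
  | bag : ∀ {x t ts}, t ∈ ts → RFV x t → RFV x (bag ts)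

/-- Linear substitution: `LSubst e x vs e'` holds iff `e'` is one of the terms
obtained from `e` by substituting the values `vs` bijectively for the free
occurrences of `x` in `e` (no such `e'` exists if the count mismatches). -/
inductive LSubst : RTm → ℕ → List RTm → RTm → Prop
  | varEq : ∀ x v, LSubst (var x) x [v] v
  | varNe : ∀ {x y}, y ≠ x → LSubst (var y) x [] (var y)
  | lamEq : ∀ x t, LSubst (lam x t) x [] (lam x t)
  | lamNe : ∀ {x y t vs t'}, y ≠ x → LSubst t x vs t' →
      LSubst (lam y t) x vs (lam y t')
  | app : ∀ {s t x us ws vs s' t'}, LSubst s x us s' → LSubst t x ws t' →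
      vs.Perm (us ++ ws) → LSubst (app s t) x vs (app s' t')
  | bagNil : ∀ x, LSubst (bag []) x [] (bag [])
  | bagCons : ∀ {v ts x us ws vs v' ts'}, LSubst v x us v' →
      LSubst (bag ts) x ws (bag ts') → vs.Perm (us ++ ws) →
      LSubst (bag (v :: ts)) x vs (bag (v' :: ts'))

/-- One step of resource reduction at the level of terms, producing a
(finite) set of resource terms: rules β_r, 0, σ₁, σ₃, contextually closed. -/
inductive RStep : RTm → Set RTm → Prop
  | beta : ∀ {x t vs}, (∀ v ∈ vs, IsRVal v) →
      RStep (app (bag [lam x t]) (bag vs)) {t' | LSubst t x vs t'}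
  | zero : ∀ {vs t}, (∀ v ∈ vs, IsRVal v) → vs.length ≠ 1 →
      RStep (app (bag vs) t) ∅
  | sigma1 : ∀ {x t s₁ s₂}, ¬ RFV x s₁ →
      RStep (app (app (bag [lam x t]) s₁) s₂) {app (bag [lam x (app t s₂)]) s₁}
  | sigma3 : ∀ {v x t s}, IsRVal v → ¬ RFV x v →
      RStep (app (bag [v]) (app (bag [lam x t]) s))
        {app (bag [lam x (app (bag [v]) t)]) s}
  | appL : ∀ {s S t}, RStep s S → RStep (app s t) {u | ∃ s' ∈ S, u = app s' t}
  | appR : ∀ {s t T}, RStep t T → RStep (app s t) {u | ∃ t' ∈ T, u = app s t'}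
  | lam : ∀ {x t T}, RStep t T → RStep (lam x t) {u | ∃ t' ∈ T, u = lam x t'}
  | bagHead : ∀ {v V ts}, RStep v V →
      RStep (bag (v :: ts)) {u | ∃ v' ∈ V, u = bag (v' :: ts)}
  | bagTail : ∀ {v ts T}, RStep (bag ts) T →
      RStep (bag (v :: ts)) {u | ∃ ts', bag ts' ∈ T ∧ u = bag (v :: ts')}

/-- The resource reduction →_r lifted to sets of resource terms:
`{e} ∪ E₂ →_r E₁ ∪ E₂` whenever `e →_r E₁` and `e ∉ E₂`. -/
inductive RSetStep : Set RTm → Set RTm → Prop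
  | mk : ∀ {e E₁ E₂}, RStep e E₁ → e ∉ E₂ → RSetStep (insert e E₂) (E₁ ∪ E₂)

/-- A set of resource terms is →_r-normal when no set-level step applies. -/
def RSetNormal (S : Set RTm) : Prop := ∀ S', ¬ RSetStep S S'

/-- `NF(E) = ⋃_{e ∈ E} nf_r(e)` : the set of resource terms occurring in the
(unique, by confluence and strong normalization) →_r-normal form of some
element of `E`. -/
def NF (E : Set RTm) : Set RTm :=
  {t | ∃ e ∈ E, ∃ S, Relation.ReflTransGen RSetStep {e} S ∧ RSetNormal S ∧ t ∈ S}

/-- `HasBRS t` : `t` contains a β_r-, σ₁- or σ₃-redex (0-redexes not counted). -/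
inductive HasBRS : RTm → Prop
  | beta : ∀ {x t vs}, (∀ v ∈ vs, IsRVal v) →
      HasBRS (app (bag [lam x t]) (bag vs))
  | sigma1 : ∀ {x t s₁ s₂}, ¬ RFV x s₁ → HasBRS (app (app (bag [lam x t]) s₁) s₂)
  | sigma3 : ∀ {v x t s}, IsRVal v → ¬ RFV x v →
      HasBRS (app (bag [v]) (app (bag [lam x t]) s))
  | appL : ∀ {s t}, HasBRS s → HasBRS (app s t)
  | appR : ∀ {s t}, HasBRS t → HasBRS (app s t)
  | lam : ∀ {x t}, HasBRS t → HasBRS (lam x t)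
  | bag : ∀ {t ts}, t ∈ ts → HasBRS t → HasBRS (bag ts)

mutual
  /-- The height of a resource term. -/
  def height : RTm → ℕ
    | var _ => 0
    | lam _ t => height t + 1
    | app s t => max (height s) (height t) + 1
    | bag ts => heightList ts + 1
  def heightList : List RTm → ℕ
    | [] => 0
    | t :: ts => max (height t) (heightList ts)
end

/-- The height of a set of resource terms (possibly infinite). -/
noncomputable def hSet (E : Set RTm) : ℕ∞ := ⨆ t ∈ E, (height t : ℕ∞)

/-- The coherence relation ¨ on resource terms. -/
inductive Coh : RTm → RTm → Prop
  | var : ∀ x, Coh (var x) (var x)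
  | lam : ∀ {x s t}, Coh s t → Coh (lam x s) (lam x t)
  | bag : ∀ {us vs}, (∀ a ∈ us ++ vs, ∀ b ∈ us ++ vs, Coh a b) →
      Coh (bag us) (bag vs)
  | app : ∀ {s₁ s₂ t₁ t₂}, Coh s₁ s₂ → Coh t₁ t₂ → Coh (app s₁ t₁) (app s₂ t₂)

/-- A clique: a set of pairwise coherent resource terms. -/
def Clique (E : Set RTm) : Prop := ∀ s ∈ E, ∀ t ∈ E, Coh s t

/-- A maximal clique: no resource term can be added keeping it a clique. -/
def MaxClique (E : Set RTm) : Prop :=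
  Clique E ∧ ∀ e : RTm, Clique (insert e E) → e ∈ E

end RTm
/-- The Taylor expansion: `InT M t` iff the simple term `t` belongs to 𝒯(M). -/
inductive InT : Tm → RTm → Prop
  | var : ∀ x n, InT (.var x) (.bag (List.replicate n (.var x)))
  | lam : ∀ {x N} (ts : List RTm), (∀ t ∈ ts, InT N t) →
      InT (.lam x N) (.bag (ts.map (RTm.lam x)))
  | app : ∀ {P Q s t}, InT P s → InT Q t → InT (.app P Q) (.app s t)

/-- The Taylor expansion 𝒯(M) of a λ-term, as a set of resource terms. -/
def Taylor (M : Tm) : Set RTm := {t | InT M t}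

/-- The normalized Taylor expansion of an approximant: `InTn A t` iff
`t ∈ 𝒯ⁿᶠ(A)`, following the grammar of approximants. -/
inductive InTn : Tm → RTm → Prop
  | var : ∀ x n, InTn (.var x) (.bag (List.replicate n (.var x)))
  | bot : InTn .bot (.bag [])
  | lam : ∀ {x A} (ts : List RTm), (∀ t ∈ ts, InTn A t) →
      InTn (.lam x A) (.bag (ts.map (RTm.lam x)))
  | spineHead : ∀ {x B t}, InTn B t →
      InTn (.app (.var x) B) (.app (.bag [.var x]) t)
  | spineApp : ∀ {S A s t}, Tm.IsBSpine S → InTn S s → InTn A t →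
      InTn (.app S A) (.app s t)
  | redex : ∀ {x A Q s t}, InTn A s → Tm.IsBSpine Q → InTn Q t →
      InTn (.app (.lam x A) Q) (.app (.bag [.lam x s]) t)

/-- The normalized Taylor expansion 𝒯ⁿᶠ(A) of an approximant. -/
def TaylorN (A : Tm) : Set RTm := {t | InTn A t}

namespace Tm

lemma le_bot_inv {A : Tm} (h : LE A bot) : A = bot := by cases h; rfl

lemma le_var_inv {A : Tm} {x} (h : LE A (var x)) : A = bot ∨ A = var x := by
  cases h with
  | refl => exact Or.inr rfl
  | botVar => exact Or.inl rfl

lemma le_lam_inv {A : Tm} {x P} (h : LE A (lam x P)) :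
    A = bot ∨ ∃ A', A = lam x A' ∧ LE A' P := by
  cases h with
  | refl => exact Or.inr ⟨P, rfl, LE.refl P⟩
  | botLam => exact Or.inl rfl
  | lam h => exact Or.inr ⟨_, rfl, h⟩

lemma le_app_inv {A : Tm} {P Q} (h : LE A (app P Q)) :
    ∃ A₁ A₂, A = app A₁ A₂ ∧ LE A₁ P ∧ LE A₂ Q := by
  cases h with
  | refl => exact ⟨P, Q, rfl, LE.refl P, LE.refl Q⟩
  | app h1 h2 => exact ⟨_, _, rfl, h1, h2⟩

lemma spine_shape {S} (h : IsBSpine S) : ∃ a b, S = app a b := by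
  cases h <;> exact ⟨_, _, rfl⟩

lemma spine_not_le_val {S T} (hs : IsBSpine S) (h : LE S T) (hv : IsVal T) : False := by
  obtain ⟨a, b, rfl⟩ := spine_shape hs
  cases T with
  | var x => rcases le_var_inv h with h | h <;> simp_all
  | lam x t => rcases le_lam_inv h with h | ⟨A', h, _⟩ <;> simp_all
  | bot => exact Tm.noConfusion (le_bot_inv h)
  | app => exact hv

lemma spine_not_le_redex {S x P Q} (hs : IsBSpine S)
    (h : LE S (app (lam x P) Q)) : False := by
  obtain ⟨A₁, A₂, heq, h1, h2⟩ := le_app_inv h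
  cases hs with
  | head hb =>
    injection heq with e1 e2
    subst e1
    rcases le_lam_inv h1 with h | ⟨A', h, _⟩ <;> simp_all
  | app hsp ha =>
    injection heq with e1 e2
    subst e1
    exact spine_not_le_val hsp h1 trivial

lemma not_le_beta {A x P V} (hA : IsA A) (h : LE A (app (lam x P) V))
    (hv : IsVal V) : False := by
  obtain ⟨A₁, A₂, rfl, h1, h2⟩ := le_app_inv h
  cases hA with
  | ofB hb =>
    cases hb with
    | spine hs =>
      cases hs with
      | head _ => rcases le_lam_inv h1 with h | ⟨A', h, _⟩ <;> simp_all
      | app hsp _ => exact spine_not_le_val hsp h1 trivial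
  | ofC hc =>
    cases hc with
    | mk _ hs => exact spine_not_le_val hs h2 hv

lemma not_le_sigma1 {A x P Q R} (hA : IsA A)
    (h : LE A (app (app (lam x P) Q) R)) : False := by
  obtain ⟨A₁, A₂, rfl, h1, h2⟩ := le_app_inv h
  cases hA with
  | ofB hb =>
    cases hb with
    | spine hs =>
      cases hs with
      | head _ => obtain ⟨_, _, e, _, _⟩ := le_app_inv h1; simp_all
      | app hsp _ => exact spine_not_le_redex hsp h1
  | ofC hc =>
    cases hc with
    | mk _ _ => obtain ⟨_, _, e, _, _⟩ := le_app_inv h1; simp_all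

lemma not_le_sigma3 {A V x P Q} (hA : IsA A)
    (h : LE A (app V (app (lam x P) Q))) (hv : IsVal V) : False := by
  obtain ⟨A₁, A₂, rfl, h1, h2⟩ := le_app_inv h
  cases hA with
  | ofB hb =>
    cases hb with
    | spine hs =>
      cases hs with
      | head hb2 =>
        obtain ⟨B₁, B₂, rfl, g1, g2⟩ := le_app_inv h2
        cases hb2 with
        | spine hs2 => exact spine_not_le_redex hs2 h2
      | app hsp _ => exact spine_not_le_val hsp h1 hv
  | ofC hc =>
    cases hc with
    | mk _ hs => exact spine_not_le_redex hs h2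

end Tm

/-- if `A` is an approximant with `A ⊑ M` and `M →_v N`, then
`A ⊑ N`. -/
theorem le_preserved_by_step (A M N : Tm) (hA : Tm.IsA A) (hM : M.NoBot)
    (h₁ : Tm.LE A M) (h₂ : Tm.Step M N) : Tm.LE A N := by
  revert hA hM h₁
  revert A
  induction h₂ with
  | beta hv => intro A hA hM h₁; exact (Tm.not_le_beta hA h₁ hv).elim
  | sigma1 hx => intro A hA hM h₁; exact (Tm.not_le_sigma1 hA h₁).elim
  | sigma3 hv hx => intro A hA hM h₁; exact (Tm.not_le_sigma3 hA h₁ hv).elim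
  | appL hstep ih =>
    intro A hA hM h₁
    obtain ⟨A₁, A₂, rfl, h1, h2⟩ := Tm.le_app_inv h₁
    have hA₁ : Tm.IsA A₁ := by
      cases hA with
      | ofB hb =>
        cases hb with
        | spine hs =>
          cases hs with
          | head _ => exact Tm.IsA.ofB (Tm.IsB.var _)
          | app hsp _ => exact Tm.IsA.ofB (Tm.IsB.spine hsp)
      | ofC hc =>
        cases hc with
        | mk ht _ => exact Tm.IsA.ofB (Tm.IsB.lam ht)
    exact Tm.LE.app (ih A₁ hA₁ hM.1 h1) h2
  | appR hstep ih =>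
    intro A hA hM h₁
    obtain ⟨A₁, A₂, rfl, h1, h2⟩ := Tm.le_app_inv h₁
    have hA₂ : Tm.IsA A₂ := by
      cases hA with
      | ofB hb =>
        cases hb with
        | spine hs =>
          cases hs with
          | head hb2 => exact Tm.IsA.ofB hb2
          | app _ ha => exact ha
      | ofC hc =>
        cases hc with
        | mk _ hs => exact Tm.IsA.ofB (Tm.IsB.spine hs)
    exact Tm.LE.app h1 (ih A₂ hA₂ hM.2 h2)
  | lam hstep ih =>
    intro A hA hM h₁
    rcases Tm.le_lam_inv h₁ with rfl | ⟨A', rfl, h'⟩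
    · exact Tm.LE.botLam _ _
    · have hA' : Tm.IsA A' := by
        cases hA with
        | ofB hb =>
          cases hb with
          | lam ht => exact ht
          | spine hs => cases hs
        | ofC hc => cases hc
      exact Tm.LE.lam (ih A' hA' hM h')
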